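/- Fix integers r ≥ 1, n ≥ 2, k ≥ 1, and indices i ≠ j in {1,…,n}. Then there exists a polynomial δ in x_1,…,x_n with nonnegative rational coefficients such that, as polynomials, ∂H_{k,r}/∂x_i − ∂H_{k,r}/∂x_j = −(x_i − x_j) · δ. In particular, for all x ∈ [0,∞)^n one has (x_i − x_j) · (∂H_{k,r}/∂x_i(x) − ∂H_{k,r}/∂x_j(x)) ≤ 0, i.e. H_{k,r} satisfies the Schur–Ostrowski criterion for Schur concavity on [0,∞)^n. -/

import Mathlib

open scoped BigOperators

/-- `exp F = Σ_{j≥0} F^j / j!` for a formal power series `F` (intended for `F` with zero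
constant term; the defining sum is truncated at order `k` when extracting the `k`-th
coefficient, which agrees with `Σ_{j≥0} F^j / j!` whenever `F` has zero constant term). -/
noncomputable def expPS {R : Type*} [CommRing R] [Algebra ℚ R] (F : PowerSeries R) :
    PowerSeries R :=
  PowerSeries.mk fun k =>
    PowerSeries.coeff (R := R) k (∑ j ∈ Finset.range (k + 1), (Nat.factorial j : ℚ)⁻¹ • F ^ j)

/-- The generating function
`h_r(x,t) = (Π_i (1 + x_i^r t)) · exp(((Σ_i x_i)^r - Σ_i x_i^r) t)`,
as a formal power series in `t` over `ℚ[x_1,…,x_n]`. -/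
noncomputable def hSeries (n r : ℕ) : PowerSeries (MvPolynomial (Fin n) ℚ) :=
  (∏ i, (1 + PowerSeries.C (R := MvPolynomial (Fin n) ℚ) (MvPolynomial.X i ^ r) * PowerSeries.X)) *
    expPS (PowerSeries.C (R := MvPolynomial (Fin n) ℚ)
        ((∑ i, MvPolynomial.X i) ^ r - ∑ i, MvPolynomial.X i ^ r) * PowerSeries.X)

/-- `H_{k,r}` as a polynomial in `x_1,…,x_n` over `ℚ`: the coefficient of `t^k` in
`h_r(x,t)`. -/
noncomputable def Hpoly (n r k : ℕ) : MvPolynomial (Fin n) ℚ :=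
  PowerSeries.coeff (R := _) k (hSeries n r)

/-- `H_{k,r}(x)` for a real vector `x`. -/
noncomputable def HReal {n : ℕ} (r k : ℕ) (x : Fin n → ℝ) : ℝ :=
  MvPolynomial.aeval x (Hpoly n r k)

/-!
Write `h_r = (1 + x_i^r t)(1 + x_j^r t) · Q · E` with `Q = ∏_{m ≠ i,j} (1 + x_m^r t)` and
`E = exp(a t)`, `a = (Σ x)^r - Σ x^r`. The derivation `D = ∂_i - ∂_j`, applied coefficientwise
in `t`, kills `Q` and sends `E` to `r (x_j^{r-1} - x_i^{r-1}) t E`, so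
`D h_r = r t Q E · P(x_i, x_j, t)` for an explicit polynomial `P`. Geometric sums factor `P` as `-(x_i - x_j) t` times a polynomial
with nonnegative coefficients. For `r ≥ 1`, `a` and hence `E` have nonnegative coefficients, so the
coefficient of `t^k` of the cofactor is the required `δ`, and it is nonnegative on `[0,∞)^n`.
-/

namespace MvPolynomial

variable {σ R : Type*} [CommSemiring R] [PartialOrder R] [IsOrderedRing R]

variable (σ R) in
def nonnegCoeffs : Subsemiring (MvPolynomial σ R) where
  carrier := {p | ∀ m, 0 ≤ p.coeff m}
  mul_mem' {p q} hp hq m := by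
    classical
    rw [coeff_mul]
    exact Finset.sum_nonneg fun x _ => mul_nonneg (hp _) (hq _)
  one_mem' m := by
    classical
    rw [coeff_one]
    split_ifs <;> simp
  add_mem' {p q} hp hq m := by
    rw [coeff_add]
    exact add_nonneg (hp m) (hq m)
  zero_mem' m := by simp

theorem monomial_mem_nonnegCoeffs (s : σ →₀ ℕ) {c : R} (hc : 0 ≤ c) :
    monomial s c ∈ nonnegCoeffs σ R := fun m => by
  classical
  rw [coeff_monomial]
  split_ifs <;> simp [hc]

theorem C_mem_nonnegCoeffs {c : R} (hc : 0 ≤ c) : C c ∈ nonnegCoeffs σ R :=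
  monomial_mem_nonnegCoeffs 0 hc

theorem X_mem_nonnegCoeffs (i : σ) : (X i : MvPolynomial σ R) ∈ nonnegCoeffs σ R :=
  monomial_mem_nonnegCoeffs _ zero_le_one

theorem aeval_nonneg_of_mem_nonnegCoeffs {S : Type*} [Field S] [LinearOrder S]
    [IsStrictOrderedRing S] {p : MvPolynomial σ ℚ} (hp : p ∈ nonnegCoeffs σ ℚ) {x : σ → S}
    (hx : ∀ l, 0 ≤ x l) : 0 ≤ aeval x p := by
  rw [aeval_def, eval₂_eq]
  refine Finset.sum_nonneg fun d _ =>
    mul_nonneg ?_ (Finset.prod_nonneg fun l _ => pow_nonneg (hx l) _)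
  rw [eq_ratCast (algebraMap ℚ S)]
  exact Rat.cast_nonneg.2 (hp d)

end MvPolynomial

namespace PowerSeries

variable {R : Type*} [CommSemiring R]

def coeffsIn (S : Subsemiring R) : Subsemiring (PowerSeries R) where
  carrier := {F | ∀ k, coeff k F ∈ S}
  mul_mem' {F G} hF hG k := by
    rw [coeff_mul]
    exact sum_mem fun p _ => mul_mem (hF _) (hG _)
  one_mem' k := by
    rw [coeff_one]
    split_ifs
    exacts [one_mem S, zero_mem S]
  add_mem' {F G} hF hG k := by
    rw [map_add]
    exact add_mem (hF k) (hG k)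
  zero_mem' k := by simp [zero_mem S]

variable {S : Subsemiring R}

theorem C_mem_coeffsIn {a : R} (ha : a ∈ S) : C a ∈ coeffsIn S := fun k => by
  rw [coeff_C]
  split_ifs
  exacts [ha, zero_mem S]

theorem X_mem_coeffsIn : (X : PowerSeries R) ∈ coeffsIn S := fun k => by
  rw [coeff_X]
  split_ifs
  exacts [one_mem S, zero_mem S]

theorem rescale_exp_mem_coeffsIn_nonnegCoeffs {σ : Type*} {a : MvPolynomial σ ℚ}
    (ha : a ∈ MvPolynomial.nonnegCoeffs σ ℚ) :
    rescale a (exp _) ∈ coeffsIn (MvPolynomial.nonnegCoeffs σ ℚ) := fun k => by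
  rw [coeff_rescale, coeff_exp, MvPolynomial.algebraMap_eq]
  exact mul_mem (pow_mem ha k) (MvPolynomial.C_mem_nonnegCoeffs (by positivity))

end PowerSeries

namespace Derivation

variable {A R : Type*} [CommSemiring A] [CommRing R] [Algebra A R]

noncomputable def mapPowerSeries (d : Derivation A R R) :
    Derivation A (PowerSeries R) (PowerSeries R) :=
  Derivation.mk'
    { toFun := fun F => PowerSeries.mk fun k => d (PowerSeries.coeff k F)
      map_add' := fun F G => by ext k; simp
      map_smul' := fun a F => by ext k; simp }
    fun F G => by
      ext k
      rw [smul_eq_mul, smul_eq_mul, mul_comm G]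
      simp only [LinearMap.coe_mk, AddHom.coe_mk, PowerSeries.coeff_mk, map_add,
        PowerSeries.coeff_mul, map_sum, leibniz, smul_eq_mul, ← Finset.sum_add_distrib]
      exact Finset.sum_congr rfl fun _ _ => by ring

section

variable (d : Derivation A R R)

@[simp]
theorem coeff_mapPowerSeries (F : PowerSeries R) (k : ℕ) :
    PowerSeries.coeff k (d.mapPowerSeries F) = d (PowerSeries.coeff k F) := by
  simp [mapPowerSeries]

@[simp]
theorem mapPowerSeries_C (a : R) : d.mapPowerSeries (PowerSeries.C a) = PowerSeries.C (d a) := by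
  ext k
  simp only [coeff_mapPowerSeries, PowerSeries.coeff_C]
  split_ifs <;> simp

@[simp]
theorem mapPowerSeries_X : d.mapPowerSeries PowerSeries.X = 0 := by
  ext k
  simp only [coeff_mapPowerSeries, PowerSeries.coeff_X]
  split_ifs <;> simp

end

theorem mapPowerSeries_rescale_exp [Algebra ℚ R] (d : Derivation ℚ R R) (a : R) :
    d.mapPowerSeries (PowerSeries.rescale a (PowerSeries.exp R)) =
      PowerSeries.C (d a) * PowerSeries.X * PowerSeries.rescale a (PowerSeries.exp R) := by
  ext k
  rw [mul_assoc, PowerSeries.coeff_C_mul, coeff_mapPowerSeries]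
  rcases k with _ | k
  · simp
  · rw [PowerSeries.coeff_succ_X_mul]
    simp only [PowerSeries.coeff_rescale, PowerSeries.coeff_exp, leibniz, map_algebraMap,
      leibniz_pow, smul_eq_mul, nsmul_eq_mul, Nat.add_sub_cancel]
    have hfact : (1 / ((k + 1).factorial : ℚ)) * (k + 1 : ℕ) = 1 / k.factorial := by
      rw [Nat.factorial_succ]
      push_cast
      field_simp
    rw [mul_zero, zero_add, ← mul_assoc, ← _root_.map_natCast (algebraMap ℚ R), ← map_mul, hfact]
    ring

end Derivation

theorem expPS_C_mul_X {R : Type*} [CommRing R] [Algebra ℚ R] (a : R) :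
    expPS (PowerSeries.C a * PowerSeries.X) = PowerSeries.rescale a (PowerSeries.exp R) := by
  ext k
  simp only [expPS, PowerSeries.coeff_mk, map_sum, PowerSeries.coeff_smul, mul_pow, ← map_pow,
    PowerSeries.coeff_C_mul_X_pow, PowerSeries.coeff_rescale, PowerSeries.coeff_exp]
  rw [Finset.sum_eq_single_of_mem k (Finset.self_mem_range_succ k)
    fun j _ hj => by simp [Ne.symm hj], if_pos rfl, Algebra.smul_def, mul_comm, one_div]

theorem Subsemiring.sum_pow_sub_sum_pow_mem {ι A : Type*} [CommRing A] (S : Subsemiring A)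
    (s : Finset ι) {x : ι → A} (hx : ∀ l ∈ s, x l ∈ S) {r : ℕ} (hr : 1 ≤ r) :
    (∑ l ∈ s, x l) ^ r - ∑ l ∈ s, x l ^ r ∈ S := by
  classical
  induction r, hr using Nat.le_induction with
  | base => simp [zero_mem S]
  | succ r _ ih =>
    have key : (∑ l ∈ s, x l) ^ (r + 1) - ∑ l ∈ s, x l ^ (r + 1) =
        (∑ l ∈ s, x l) * ((∑ l ∈ s, x l) ^ r - ∑ l ∈ s, x l ^ r) +
          ∑ m ∈ s, (∑ l ∈ s, x l - x m) * x m ^ r := by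
      simp only [sub_mul, Finset.sum_sub_distrib, ← Finset.mul_sum, ← pow_succ']
      ring
    rw [key]
    refine add_mem (mul_mem (sum_mem hx) ih) (sum_mem fun m hm => mul_mem ?_ (pow_mem (hx m hm) r))
    rw [← Finset.sum_erase_add _ _ hm, add_sub_cancel_right]
    exact sum_mem fun l hl => hx l (Finset.mem_of_mem_erase hl)

theorem MvPolynomial.pderiv_sum_X_pow_sub_sum_X_pow {σ R : Type*} [Fintype σ] [CommRing R]
    (t : σ) (r : ℕ) :
    pderiv t ((∑ l, X l) ^ r - ∑ l, X l ^ r : MvPolynomial σ R) =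
      r * ((∑ l, X l) ^ (r - 1) - X t ^ (r - 1) : MvPolynomial σ R) := by
  classical
  simp [pderiv_X, Pi.single_apply, mul_sub]

-- `(∂_i - ∂_j) h_{s+1} = (s+1) t Q E` times the left side, at `u = x_i`, `v = x_j`.
theorem schur_difference_factorization {A : Type*} [CommRing A] (u v t : A) (s : ℕ) :
    u ^ s * (1 + v ^ (s + 1) * t) - v ^ s * (1 + u ^ (s + 1) * t) +
        (v ^ s - u ^ s) * ((1 + u ^ (s + 1) * t) * (1 + v ^ (s + 1) * t)) =
      -((u - v) * t * (∑ m ∈ Finset.range (2 * s + 1), u ^ m * v ^ (2 * s + 1 - 1 - m) +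
        u ^ (s + 1) * v ^ (s + 1) * (∑ m ∈ Finset.range s, u ^ m * v ^ (s - 1 - m)) * t)) := by
  linear_combination t * geom_sum₂_mul u v (2 * s + 1) +
    (u ^ (s + 1) * v ^ (s + 1) * t ^ 2) * geom_sum₂_mul u v s

section hSeries

open MvPolynomial

variable {n : ℕ}

noncomputable def hSeriesOtherFactors (n r : ℕ) (i j : Fin n) :
    PowerSeries (MvPolynomial (Fin n) ℚ) :=
  ∏ m ∈ (Finset.univ.erase i).erase j, (1 + PowerSeries.C (X m ^ r) * PowerSeries.X)

noncomputable def hSeriesExpFactor (n r : ℕ) : PowerSeries (MvPolynomial (Fin n) ℚ) :=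
  PowerSeries.rescale ((∑ l, X l) ^ r - ∑ l, X l ^ r) (PowerSeries.exp _)

theorem hSeries_eq_mul (r : ℕ) {i j : Fin n} (hij : i ≠ j) :
    hSeries n r = (1 + PowerSeries.C (X i ^ r) * PowerSeries.X) *
      (1 + PowerSeries.C (X j ^ r) * PowerSeries.X) * hSeriesOtherFactors n r i j *
        hSeriesExpFactor n r := by
  classical
  rw [hSeries, expPS_C_mul_X, hSeriesOtherFactors, hSeriesExpFactor, mul_assoc (1 + _ * _),
    Finset.mul_prod_erase _ (fun m => 1 + PowerSeries.C (X m ^ r) * PowerSeries.X)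
      (Finset.mem_erase.2 ⟨hij.symm, Finset.mem_univ j⟩),
    Finset.mul_prod_erase _ (fun m => 1 + PowerSeries.C (X m ^ r) * PowerSeries.X)
      (Finset.mem_univ i)]

theorem mapPowerSeries_hSeriesOtherFactors (r : ℕ) (i j : Fin n) :
    (pderiv (R := ℚ) i - pderiv j).mapPowerSeries (hSeriesOtherFactors n r i j) = 0 := by
  classical
  refine Finset.prod_induction _ (fun F => _ = 0) (fun F G hF hG => by simp [hF, hG])
    (Derivation.map_one_eq_zero _) fun m hm => ?_
  obtain ⟨hmj, hmi⟩ := Finset.mem_erase.1 hm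
  simp [pderiv_X, hmj, (Finset.mem_erase.1 hmi).1]

theorem mapPowerSeries_hSeriesExpFactor (s : ℕ) (i j : Fin n) :
    (pderiv (R := ℚ) i - pderiv j).mapPowerSeries (hSeriesExpFactor n (s + 1)) =
      PowerSeries.C ((s + 1 : MvPolynomial (Fin n) ℚ) * (X j ^ s - X i ^ s)) * PowerSeries.X *
        hSeriesExpFactor n (s + 1) := by
  rw [hSeriesExpFactor, Derivation.mapPowerSeries_rescale_exp, Derivation.sub_apply,
    pderiv_sum_X_pow_sub_sum_X_pow, pderiv_sum_X_pow_sub_sum_X_pow]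
  congr 3
  push_cast
  ring

noncomputable def hSeriesQuotient (n s : ℕ) (i j : Fin n) : PowerSeries (MvPolynomial (Fin n) ℚ) :=
  (s + 1 : PowerSeries (MvPolynomial (Fin n) ℚ)) * PowerSeries.X ^ 2 *
    (PowerSeries.C (∑ m ∈ Finset.range (2 * s + 1), X i ^ m * X j ^ (2 * s + 1 - 1 - m)) +
      PowerSeries.C (X i ^ (s + 1) * X j ^ (s + 1) *
        ∑ m ∈ Finset.range s, X i ^ m * X j ^ (s - 1 - m)) * PowerSeries.X) *
    hSeriesOtherFactors n (s + 1) i j * hSeriesExpFactor n (s + 1)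

theorem hSeriesQuotient_mem_coeffsIn (s : ℕ) (i j : Fin n) :
    hSeriesQuotient n s i j ∈ PowerSeries.coeffsIn (nonnegCoeffs (Fin n) ℚ) := by
  have hXi := X_mem_nonnegCoeffs (R := ℚ) i
  have hXj := X_mem_nonnegCoeffs (R := ℚ) j
  have hgeom : ∀ N, ∑ m ∈ Finset.range N, X i ^ m * X j ^ (N - 1 - m) ∈ nonnegCoeffs (Fin n) ℚ :=
    fun N => sum_mem fun m _ => mul_mem (pow_mem hXi m) (pow_mem hXj _)
  have hOther : hSeriesOtherFactors n (s + 1) i j ∈ PowerSeries.coeffsIn (nonnegCoeffs (Fin n) ℚ) :=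
    prod_mem fun m _ => add_mem (one_mem _) (mul_mem
      (PowerSeries.C_mem_coeffsIn (pow_mem (X_mem_nonnegCoeffs m) _)) PowerSeries.X_mem_coeffsIn)
  have hExp : hSeriesExpFactor n (s + 1) ∈ PowerSeries.coeffsIn (nonnegCoeffs (Fin n) ℚ) :=
    PowerSeries.rescale_exp_mem_coeffsIn_nonnegCoeffs
      (Subsemiring.sum_pow_sub_sum_pow_mem _ _ (fun l _ => X_mem_nonnegCoeffs l) s.succ_pos)
  refine mul_mem (mul_mem (mul_mem (mul_mem (add_mem (natCast_mem _ s) (one_mem _))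
    (pow_mem PowerSeries.X_mem_coeffsIn 2)) (add_mem (PowerSeries.C_mem_coeffsIn (hgeom _))
      (mul_mem (PowerSeries.C_mem_coeffsIn ?_) PowerSeries.X_mem_coeffsIn))) hOther) hExp
  exact mul_mem (mul_mem (pow_mem hXi _) (pow_mem hXj _)) (hgeom s)

theorem mapPowerSeries_pderiv_sub_pderiv_hSeries (s : ℕ) {i j : Fin n} (hij : i ≠ j) :
    (pderiv (R := ℚ) i - pderiv j).mapPowerSeries (hSeries n (s + 1)) =
      -(PowerSeries.C (X i - X j) * hSeriesQuotient n s i j) := by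
  have hDi : (pderiv i - pderiv j : Derivation ℚ (MvPolynomial (Fin n) ℚ) _) (X i ^ (s + 1)) =
      (s + 1 : MvPolynomial (Fin n) ℚ) * X i ^ s := by
    simp [pderiv_X, hij]
  have hDj : (pderiv i - pderiv j : Derivation ℚ (MvPolynomial (Fin n) ℚ) _) (X j ^ (s + 1)) =
      -((s + 1 : MvPolynomial (Fin n) ℚ) * X j ^ s) := by
    simp [pderiv_X, hij.symm]
  rw [hSeries_eq_mul _ hij, hSeriesQuotient]
  simp only [Derivation.leibniz, smul_eq_mul, map_add, Derivation.map_one_eq_zero,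
    Derivation.mapPowerSeries_C, Derivation.mapPowerSeries_X, mapPowerSeries_hSeriesOtherFactors,
    mapPowerSeries_hSeriesExpFactor, hDi, hDj]
  simp only [map_mul, map_sub, map_neg, map_pow, map_add, map_natCast, map_one, map_sum]
  linear_combination ((s + 1 : PowerSeries (MvPolynomial (Fin n) ℚ)) * PowerSeries.X *
      hSeriesOtherFactors n (s + 1) i j * hSeriesExpFactor n (s + 1)) *
    schur_difference_factorization (PowerSeries.C (X i : MvPolynomial (Fin n) ℚ))
      (PowerSeries.C (X j)) PowerSeries.X s

end hSeries

theorem stmt_15_general (r n k : ℕ) (hr : 1 ≤ r)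
    (i j : Fin n) (hij : i ≠ j) :
    ∃ δ : MvPolynomial (Fin n) ℚ,
      (∀ m : (Fin n) →₀ ℕ, 0 ≤ MvPolynomial.coeff m δ) ∧
      MvPolynomial.pderiv i (Hpoly n r k) - MvPolynomial.pderiv j (Hpoly n r k)
        = -((MvPolynomial.X i - MvPolynomial.X j) * δ) ∧
      ∀ x : Fin n → ℝ, (∀ l, 0 ≤ x l) →
        (x i - x j) *
          (MvPolynomial.aeval x (MvPolynomial.pderiv i (Hpoly n r k)) -
            MvPolynomial.aeval x (MvPolynomial.pderiv j (Hpoly n r k))) ≤ 0 := by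
  obtain ⟨s, rfl⟩ : ∃ s, r = s + 1 := ⟨r - 1, by omega⟩
  set δ := PowerSeries.coeff k (hSeriesQuotient n s i j)
  have hδ : MvPolynomial.pderiv i (Hpoly n (s + 1) k) - MvPolynomial.pderiv j (Hpoly n (s + 1) k)
      = -((MvPolynomial.X i - MvPolynomial.X j) * δ) := by
    rw [← Derivation.sub_apply, Hpoly, ← Derivation.coeff_mapPowerSeries,
      mapPowerSeries_pderiv_sub_pderiv_hSeries s hij, map_neg, PowerSeries.coeff_C_mul]
  have hδ_nonneg := hSeriesQuotient_mem_coeffsIn s i j k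
  refine ⟨δ, hδ_nonneg, hδ, fun x hx => ?_⟩
  have hδx := MvPolynomial.aeval_nonneg_of_mem_nonnegCoeffs hδ_nonneg hx
  rw [← map_sub, hδ, map_neg, map_mul, map_sub, MvPolynomial.aeval_X, MvPolynomial.aeval_X]
  nlinarith [mul_nonneg (mul_self_nonneg (x i - x j)) hδx]

theorem stmt_15 (r n k : ℕ) (hr : 1 ≤ r) (hn : 2 ≤ n) (hk : 1 ≤ k)
    (i j : Fin n) (hij : i ≠ j) :
    ∃ δ : MvPolynomial (Fin n) ℚ,
      (∀ m : (Fin n) →₀ ℕ, 0 ≤ MvPolynomial.coeff m δ) ∧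
      MvPolynomial.pderiv i (Hpoly n r k) - MvPolynomial.pderiv j (Hpoly n r k)
        = -((MvPolynomial.X i - MvPolynomial.X j) * δ) ∧
      ∀ x : Fin n → ℝ, (∀ l, 0 ≤ x l) →
        (x i - x j) *
          (MvPolynomial.aeval x (MvPolynomial.pderiv i (Hpoly n r k)) -
            MvPolynomial.aeval x (MvPolynomial.pderiv j (Hpoly n r k))) ≤ 0 :=
  stmt_15_general r n k hr i j hij
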